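/- Let s : S × (X' × A) → S × (X × B) be a transition, g : X → X' a function, j ∈ S and x₀ ∈ X. Then the causal function induced by the Mealy machine with state S × X', initial state (j, g x₀) and transition ((σ, x'), a) ↦ let (σ', (x, b)) = s(σ, (x', a)) in ((σ', g x), b) equals the causal function induced by the Mealy machine with state S × X, initial state (j, x₀) and transition ((σ, x), a) ↦ let (σ', (x₂, b)) = s(σ, (g x, a)) in ((σ', x₂), b). -/

import Mathlib

def Causal {A B : Type*} (f : (ℕ → A) → (ℕ → B)) : Prop :=
  ∀ x y : ℕ → A, ∀ n : ℕ, (∀ i ≤ n, x i = y i) → ∀ i ≤ n, f x i = f y i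

def mealyStates {A B T : Type*} (t0 : T) (ρ : T × A → T × B) (x : ℕ → A) : ℕ → T
  | 0 => t0
  | n + 1 => (ρ (mealyStates t0 ρ x n, x n)).1

def mealyInduced {A B T : Type*} (t0 : T) (ρ : T × A → T × B) (x : ℕ → A) (n : ℕ) : B :=
  (ρ (mealyStates t0 ρ x n, x n)).2

/-- Delayed dinaturality for Mealy machines. -/
theorem delayed_dinaturality {S X X' A B : Type*}
    (s : S × (X' × A) → S × (X × B)) (g : X → X') (j : S) (x₀ : X) :
    mealyInduced (T := S × X') (j, g x₀)
      (fun p : (S × X') × A =>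
        let out := s (p.1.1, (p.1.2, p.2))
        ((out.1, g out.2.1), out.2.2))
      = mealyInduced (T := S × X) (j, x₀)
          (fun p : (S × X) × A =>
            let out := s (p.1.1, (g p.1.2, p.2))
            ((out.1, out.2.1), out.2.2)) := by
  funext x n
  set ρ1 := (fun p : (S × X') × A =>
        let out := s (p.1.1, (p.1.2, p.2))
        ((out.1, g out.2.1), out.2.2)) with hρ1
  set ρ2 := (fun p : (S × X) × A =>
        let out := s (p.1.1, (g p.1.2, p.2))
        ((out.1, out.2.1), out.2.2)) with hρ2
  have key : ∀ m, mealyStates (j, g x₀) ρ1 x m =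
      ((mealyStates (j, x₀) ρ2 x m).1, g (mealyStates (j, x₀) ρ2 x m).2) := by
    intro m
    induction m with
    | zero => simp [mealyStates]
    | succ k ih => simp only [mealyStates]; rw [ih]
  simp only [mealyInduced]; rw [key n]
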